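/- Let ψ(x) = B₀x + b₀ + φ(x) with φ Lipschitz with constant L < σ_min(B₀), and let x* satisfy ψ(x*) = 0. Then for all x ∈ ℝⁿ: ‖ψ(x)‖/(‖B₀‖ + L) ≤ ‖x − x*‖ ≤ ‖ψ(x)‖/(σ_min(B₀) − L). -/

import Mathlib

noncomputable def mApp {n : ℕ} (B : Matrix (Fin n) (Fin n) ℝ) (x : EuclideanSpace ℝ (Fin n)) :
    EuclideanSpace ℝ (Fin n) := Matrix.toEuclideanCLM (𝕜 := ℝ) B x

noncomputable def specNorm {n : ℕ} (B : Matrix (Fin n) (Fin n) ℝ) : ℝ :=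
  ‖Matrix.toEuclideanCLM (𝕜 := ℝ) B‖

noncomputable def sigmaMin {n : ℕ} (B : Matrix (Fin n) (Fin n) ℝ) : ℝ :=
  sInf {r : ℝ | ∃ v : EuclideanSpace ℝ (Fin n), ‖v‖ = 1 ∧ r = ‖mApp B v‖}

def vabs {n : ℕ} (v : EuclideanSpace ℝ (Fin n)) : EuclideanSpace ℝ (Fin n) := WithLp.toLp 2 (fun i => |v i|)

/-!
Subtracting `ψ x* = 0` gives `ψ x = B₀ (x - x*) + (φ x - φ x*)`. The linear part has norm between
`σ_min(B₀) ‖x - x*‖` and `‖B₀‖ ‖x - x*‖`, the perturbation has norm at most `L ‖x - x*‖`, and the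
triangle inequality in both directions gives the two bounds.
-/

section AffinePerturbation

variable {E F 𝓕 : Type*} [SeminormedAddCommGroup E] [SeminormedAddCommGroup F]
  [FunLike 𝓕 E F] [AddMonoidHomClass 𝓕 E F] {A : 𝓕} {b : F} {φ ψ : E → F} {c L : ℝ}

theorem sub_eq_of_eq_add_add (hψ : ∀ x, ψ x = A x + b + φ x) (x y : E) :
    ψ x - ψ y = A (x - y) + (φ x - φ y) := by
  rw [hψ, hψ, map_sub]
  abel

theorem norm_sub_le_of_eq_add_add (hψ : ∀ x, ψ x = A x + b + φ x)
    (hA : ∀ v, ‖A v‖ ≤ c * ‖v‖) (hφ : ∀ x y, ‖φ x - φ y‖ ≤ L * ‖x - y‖) (x y : E) :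
    ‖ψ x - ψ y‖ ≤ (c + L) * ‖x - y‖ :=
  calc ‖ψ x - ψ y‖ = ‖A (x - y) + (φ x - φ y)‖ := by rw [sub_eq_of_eq_add_add hψ]
    _ ≤ ‖A (x - y)‖ + ‖φ x - φ y‖ := norm_add_le _ _
    _ ≤ c * ‖x - y‖ + L * ‖x - y‖ := add_le_add (hA _) (hφ x y)
    _ = (c + L) * ‖x - y‖ := by ring

theorem mul_norm_sub_le_of_eq_add_add (hψ : ∀ x, ψ x = A x + b + φ x)
    (hA : ∀ v, c * ‖v‖ ≤ ‖A v‖) (hφ : ∀ x y, ‖φ x - φ y‖ ≤ L * ‖x - y‖) (x y : E) :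
    (c - L) * ‖x - y‖ ≤ ‖ψ x - ψ y‖ :=
  calc (c - L) * ‖x - y‖ = c * ‖x - y‖ - L * ‖x - y‖ := by ring
    _ ≤ ‖A (x - y)‖ - ‖φ x - φ y‖ := sub_le_sub (hA _) (hφ x y)
    _ ≤ ‖A (x - y) + (φ x - φ y)‖ := norm_sub_le_norm_add _ _
    _ = ‖ψ x - ψ y‖ := by rw [sub_eq_of_eq_add_add hψ]

end AffinePerturbation

theorem norm_mApp_le {n : ℕ} (B : Matrix (Fin n) (Fin n) ℝ) (v : EuclideanSpace ℝ (Fin n)) :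
    ‖mApp B v‖ ≤ specNorm B * ‖v‖ :=
  (Matrix.toEuclideanCLM (𝕜 := ℝ) B).le_opNorm v

theorem sigmaMin_mul_norm_le {n : ℕ} (B : Matrix (Fin n) (Fin n) ℝ)
    (v : EuclideanSpace ℝ (Fin n)) : sigmaMin B * ‖v‖ ≤ ‖mApp B v‖ := by
  rcases eq_or_ne v 0 with rfl | hv
  · simp
  have hv : 0 < ‖v‖ := norm_pos_iff.mpr hv
  have hunit : ‖‖v‖⁻¹ • v‖ = 1 := by
    rw [norm_smul, norm_inv, norm_norm, inv_mul_cancel₀ hv.ne']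
  have hle : sigmaMin B ≤ ‖v‖⁻¹ * ‖mApp B v‖ := by
    refine csInf_le ⟨0, ?_⟩ ⟨_, hunit, ?_⟩
    · rintro r ⟨w, -, rfl⟩
      exact norm_nonneg _
    · simp only [mApp, map_smul, norm_smul, norm_inv, norm_norm]
  rwa [le_inv_mul_iff₀ hv, mul_comm] at hle

theorem stmt_8 {n : ℕ} (B₀ : Matrix (Fin n) (Fin n) ℝ) (b₀ : EuclideanSpace ℝ (Fin n))
    (φ : EuclideanSpace ℝ (Fin n) → EuclideanSpace ℝ (Fin n)) (L : ℝ)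
    (hφ : ∀ x y, ‖φ x - φ y‖ ≤ L * ‖x - y‖) (hσ : L < sigmaMin B₀)
    (ψ : EuclideanSpace ℝ (Fin n) → EuclideanSpace ℝ (Fin n))
    (hψ : ∀ x, ψ x = mApp B₀ x + b₀ + φ x)
    (xs : EuclideanSpace ℝ (Fin n)) (hxs : ψ xs = 0) :
    ∀ x : EuclideanSpace ℝ (Fin n),
      ‖ψ x‖ / (specNorm B₀ + L) ≤ ‖x - xs‖ ∧
        ‖x - xs‖ ≤ ‖ψ x‖ / (sigmaMin B₀ - L) := by
  intro x
  have hψ' : ∀ x, ψ x = Matrix.toEuclideanCLM (𝕜 := ℝ) B₀ x + b₀ + φ x := hψ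
  have hupper := norm_sub_le_of_eq_add_add hψ' (norm_mApp_le B₀) hφ x xs
  have hlower := mul_norm_sub_le_of_eq_add_add hψ' (sigmaMin_mul_norm_le B₀) hφ x xs
  rw [hxs, sub_zero] at hupper hlower
  constructor
  · rcases le_or_gt (specNorm B₀ + L) 0 with hden | hden
    · exact (div_nonpos_of_nonneg_of_nonpos (norm_nonneg _) hden).trans (norm_nonneg _)
    · rwa [div_le_iff₀ hden, mul_comm]
  · rwa [le_div_iff₀ (sub_pos.mpr hσ), mul_comm]
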